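/- Let n ≥ 4 be an even integer and let I = ⟨x_1x_2, x_2x_3, …, x_{n−1}x_n, x_nx_1⟩ ⊂ K[x_1,…,x_n] be the edge ideal of the cycle C_n over a field K. Then v(I^k) = 2k − 1 for all integers k ≥ 1 with k ≥ n/2 − 1. -/

import Mathlib

open MvPolynomial

/-- A graded (homogeneous) ideal: one generated by homogeneous polynomials. -/
def IsHomogeneousIdeal {K : Type*} [Field K] {n : ℕ}
    (I : Ideal (MvPolynomial (Fin n) K)) : Prop :=
  ∃ G : Set (MvPolynomial (Fin n) K),
    (∀ f ∈ G, ∃ d, f.IsHomogeneous d) ∧ I = Ideal.span G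

/-- `Ass(I)`: the associated primes of `S/I`. -/
def Ass {K : Type*} [Field K] {n : ℕ} (I : Ideal (MvPolynomial (Fin n) K)) :
    Set (Ideal (MvPolynomial (Fin n) K)) :=
  associatedPrimes (MvPolynomial (Fin n) K) (MvPolynomial (Fin n) K ⧸ I)

/-- The local v-number `v_p(I)`. -/
noncomputable def vNumberAt {K : Type*} [Field K] {n : ℕ}
    (I p : Ideal (MvPolynomial (Fin n) K)) : ℕ :=
  sInf {d | ∃ f : MvPolynomial (Fin n) K, f.IsHomogeneous d ∧
    I.colon (Ideal.span {f}) = p}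

/-- The v-number `v(I)`. -/
noncomputable def vNumber {K : Type*} [Field K] {n : ℕ}
    (I : Ideal (MvPolynomial (Fin n) K)) : ℕ :=
  sInf {d | ∃ f : MvPolynomial (Fin n) K, ∃ p ∈ Ass I, f.IsHomogeneous d ∧
    I.colon (Ideal.span {f}) = p}

/-- `α(J)`: the least degree of a nonzero element of `J`. -/
noncomputable def alphaNum {K : Type*} [Field K] {n : ℕ}
    (J : Ideal (MvPolynomial (Fin n) K)) : ℕ :=
  sInf {d | ∃ f ∈ J, f ≠ 0 ∧ f.totalDegree = d}

/-- `c(I) = max{α(p) : p ∈ Ass(I)}`. -/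
noncomputable def cNum {K : Type*} [Field K] {n : ℕ}
    (I : Ideal (MvPolynomial (Fin n) K)) : ℕ :=
  sSup (alphaNum '' Ass I)

namespace S16

variable {K : Type*} [Field K] {n : ℕ}

def idx (n : ℕ) [NeZero n] (j : ℕ) : Fin n := ⟨j % n, Nat.mod_lt _ (Nat.pos_of_neZero n)⟩

noncomputable def eExp (n : ℕ) [NeZero n] (j : ℕ) : Fin n →₀ ℕ :=
  Finsupp.single (idx n j) 1 + Finsupp.single (idx n (j + 1)) 1

/-- A linear weight on exponent vectors. -/
def W (w : Fin n → ℕ) : (Fin n →₀ ℕ) →+ ℕ where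
  toFun e := ∑ i, w i * e i
  map_zero' := by simp
  map_add' e e' := by simp [mul_add, Finset.sum_add_distrib]

lemma W_apply (w : Fin n → ℕ) (e : Fin n →₀ ℕ) : W w e = ∑ i, w i * e i := rfl

lemma W_single (w : Fin n → ℕ) (a : Fin n) (c : ℕ) :
    W w (Finsupp.single a c) = w a * c := by
  rw [W_apply]
  simp [Finsupp.single_apply, mul_ite, Finset.sum_ite_eq]

lemma W_mono (w : Fin n → ℕ) {e e' : Fin n →₀ ℕ} (h : e ≤ e') : W w e ≤ W w e' := by
  rw [W_apply, W_apply]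
  exact Finset.sum_le_sum fun i _ => Nat.mul_le_mul_left _ (Finsupp.le_def.mp h i)

lemma W_one (e : Fin n →₀ ℕ) : W (fun _ => 1) e = Finsupp.degree e := by
  rw [W_apply, Finsupp.degree]
  simp only [one_mul]
  exact (Finset.sum_subset (Finset.subset_univ _)
    (fun i _ hi => Finsupp.notMem_support_iff.mp hi)).symm

lemma homog_W_one {φ : MvPolynomial (Fin n) K} {D : ℕ} (h : φ.IsHomogeneous D)
    {m : Fin n →₀ ℕ} (hm : coeff m φ ≠ 0) : W (fun _ => 1) m = D := by
  rw [W_one, Finsupp.degree_eq_weight_one]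
  exact h hm

/-- `Dk n k m` : `m` dominates a sum of `k` edge exponent vectors. -/
def Dk (n : ℕ) [NeZero n] (k : ℕ) (m : Fin n →₀ ℕ) : Prop :=
  ∃ μ : Multiset ℕ, Multiset.card μ = k ∧ (μ.map (eExp n)).sum ≤ m

lemma Dk_add [NeZero n] {k1 k2 : ℕ} {m1 m2 : Fin n →₀ ℕ} (h1 : Dk n k1 m1) (h2 : Dk n k2 m2) :
    Dk n (k1 + k2) (m1 + m2) := by
  obtain ⟨μ1, hc1, hl1⟩ := h1
  obtain ⟨μ2, hc2, hl2⟩ := h2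
  exact ⟨μ1 + μ2, by simp [hc1, hc2], by
    rw [Multiset.map_add, Multiset.sum_add]; exact add_le_add hl1 hl2⟩

/-- The ideal of polynomials all of whose monomials dominate a product of `k` edges. -/
def Jk (K : Type*) [Field K] (n : ℕ) [NeZero n] (k : ℕ) : Ideal (MvPolynomial (Fin n) K) where
  carrier := {h | ∀ m ∈ h.support, Dk n k m}
  zero_mem' := by simp
  add_mem' {a b} ha hb := fun m hm => by
    rcases Finset.mem_union.mp (MvPolynomial.support_add hm) with h | h
    · exact ha m h
    · exact hb m h
  smul_mem' c a ha := fun m hm => by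
    rw [smul_eq_mul] at hm
    obtain ⟨u, hu, v, hv, rfl⟩ := Finset.mem_add.mp (MvPolynomial.support_mul _ _ hm)
    exact (ha v hv).imp fun μ ⟨hc, hl⟩ => ⟨hc, hl.trans le_add_self⟩

lemma mem_Jk_iff [NeZero n] {k : ℕ} {h : MvPolynomial (Fin n) K} :
    h ∈ Jk K n k ↔ ∀ m ∈ h.support, Dk n k m := Iff.rfl

lemma mul_mem_Jk [NeZero n] {k1 k2 : ℕ} {a b : MvPolynomial (Fin n) K}
    (ha : a ∈ Jk K n k1) (hb : b ∈ Jk K n k2) : a * b ∈ Jk K n (k1 + k2) := by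
  intro m hm
  obtain ⟨u, hu, v, hv, rfl⟩ := Finset.mem_add.mp (MvPolynomial.support_mul _ _ hm)
  exact Dk_add (ha u hu) (hb v hv)



def cycGens (n : ℕ) (K : Type*) [Field K] [NeZero n] : Set (MvPolynomial (Fin n) K) :=
  {f | ∃ (i : ℕ) (h : i + 1 < n),
      f = (X (⟨i, Nat.lt_of_succ_lt h⟩ : Fin n) : MvPolynomial (Fin n) K) * X (⟨i + 1, h⟩ : Fin n)} ∪
    {(X (⟨n - 1, Nat.sub_lt (Nat.pos_of_neZero n) one_pos⟩ : Fin n) : MvPolynomial (Fin n) K) *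
      X (⟨0, Nat.pos_of_neZero n⟩ : Fin n)}

lemma succ_mod [NeZero n] (hn2 : 2 ≤ n) (j : ℕ) :
    (j + 1) % n = if j % n + 1 = n then 0 else j % n + 1 := by
  have h1 : (j + 1) % n = (j % n + 1 % n) % n := by rw [Nat.add_mod]
  have h2 : 1 % n = 1 := Nat.mod_eq_of_lt (by omega)
  have h3 : j % n < n := Nat.mod_lt _ (by omega)
  split_ifs with hc
  · rw [h1, h2, hc, Nat.mod_self]
  · rw [h1, h2, Nat.mod_eq_of_lt (by omega)]

lemma edge_mem [NeZero n] (hn2 : 2 ≤ n) {I : Ideal (MvPolynomial (Fin n) K)}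
    (hI : I = Ideal.span (cycGens n K)) (j : ℕ) :
    (X (idx n j) : MvPolynomial (Fin n) K) * X (idx n (j + 1)) ∈ I := by
  subst hI
  apply Ideal.subset_span
  have h3 : j % n < n := Nat.mod_lt _ (by omega)
  have hs := succ_mod hn2 j
  by_cases hc : j % n + 1 = n
  · right
    have e1 : idx n j = ⟨n - 1, Nat.sub_lt (Nat.pos_of_neZero n) one_pos⟩ :=
      Fin.ext (show j % n = n - 1 by omega)
    have e2 : idx n (j + 1) = ⟨0, Nat.pos_of_neZero n⟩ :=
      Fin.ext (show (j + 1) % n = 0 by rw [hs]; simp [hc])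
    rw [e1, e2]; rfl
  · left
    have hlt : j % n + 1 < n := by omega
    refine ⟨j % n, hlt, ?_⟩
    have e1 : idx n j = ⟨j % n, Nat.lt_of_succ_lt hlt⟩ := rfl
    have e2 : idx n (j + 1) = ⟨j % n + 1, hlt⟩ :=
      Fin.ext (show (j + 1) % n = j % n + 1 by rw [hs]; simp [hc])
    rw [e1, e2]


lemma X_eq (i : Fin n) : (X i : MvPolynomial (Fin n) K) = monomial (Finsupp.single i 1) 1 := rfl

lemma X_mul_X (a b : Fin n) : (X a : MvPolynomial (Fin n) K) * X b
    = monomial (Finsupp.single a 1 + Finsupp.single b 1) 1 := by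
  rw [X_eq, X_eq, monomial_mul, one_mul]

lemma gens_le_Jk1 [NeZero n] (hn2 : 2 ≤ n) {I : Ideal (MvPolynomial (Fin n) K)}
    (hI : I = Ideal.span (cycGens n K)) : I ≤ Jk K n 1 := by
  subst hI
  rw [Ideal.span_le]
  have key : ∀ j : ℕ, (X (idx n j) : MvPolynomial (Fin n) K) * X (idx n (j + 1)) ∈ Jk K n 1 := by
    intro j m hm
    classical
    rw [X_mul_X, MvPolynomial.support_monomial] at hm
    simp only [one_ne_zero, if_false, Finset.mem_singleton] at hm
    subst hm
    exact ⟨{j}, rfl, by simp [eExp]⟩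
  rintro g (⟨i, h, rfl⟩ | rfl)
  · have e1 : (⟨i, Nat.lt_of_succ_lt h⟩ : Fin n) = idx n i :=
      Fin.ext (show i = i % n from (Nat.mod_eq_of_lt (by omega)).symm)
    have e2 : (⟨i + 1, h⟩ : Fin n) = idx n (i + 1) :=
      Fin.ext (show i + 1 = (i + 1) % n from (Nat.mod_eq_of_lt h).symm)
    rw [e1, e2]; exact key i
  · have e1 : (⟨n - 1, Nat.sub_lt (Nat.pos_of_neZero n) one_pos⟩ : Fin n) = idx n (n - 1) :=
      Fin.ext (show n - 1 = (n - 1) % n from (Nat.mod_eq_of_lt (by omega)).symm)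
    have e2 : (⟨0, Nat.pos_of_neZero n⟩ : Fin n) = idx n (n - 1 + 1) :=
      Fin.ext (show 0 = (n - 1 + 1) % n by rw [show n - 1 + 1 = n by omega, Nat.mod_self])
    rw [e1, e2]; exact key (n - 1)

lemma pow_le_Jk [NeZero n] (hn2 : 2 ≤ n) {I : Ideal (MvPolynomial (Fin n) K)}
    (hI : I = Ideal.span (cycGens n K)) : ∀ k : ℕ, I ^ k ≤ Jk K n k := by
  subst hI
  intro k
  induction k with
  | zero =>
    intro x _
    exact fun m _ => ⟨0, rfl, by simp⟩
  | succ k ih =>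
    rw [pow_succ, Ideal.mul_le]
    intro r hr s hs
    exact mul_mem_Jk (ih hr) (gens_le_Jk1 hn2 rfl hs)

/-- weight giving 1 to even-indexed variables -/
def wEv (n : ℕ) : Fin n → ℕ := fun i => if Even (i : ℕ) then 1 else 0

lemma even_mod (hne : Even n) (j : ℕ) [NeZero n] : (Even (j % n) ↔ Even j) := by
  have h2 : n % 2 = 0 := Nat.even_iff.mp hne
  have := Nat.mod_mod_of_dvd j (Nat.dvd_of_mod_eq_zero h2)
  rw [Nat.even_iff, Nat.even_iff, this]

lemma W_eExp_even [NeZero n] (hne : Even n) (j : ℕ) : W (wEv n) (eExp n j) = 1 := by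
  rw [eExp, map_add, W_single, W_single]
  have h1 : ((idx n j : Fin n) : ℕ) = j % n := rfl
  have h2 : ((idx n (j + 1) : Fin n) : ℕ) = (j + 1) % n := rfl
  simp only [wEv, h1, h2, mul_one]
  rw [if_congr (even_mod hne j) rfl rfl, if_congr (even_mod hne (j + 1)) rfl rfl]
  have hj1 := Nat.even_add_one (n := j)
  rcases Nat.even_or_odd j with h | h
  · rw [if_pos h, if_neg (by rw [hj1]; exact fun h' => h' h)]
  · have hnj : ¬ Even j := Nat.not_even_iff_odd.mpr h
    rw [if_neg hnj, if_pos (hj1.mpr hnj)]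

lemma W_eExp_one [NeZero n] (j : ℕ) : W (fun _ => (1:ℕ)) (eExp n j) = 2 := by
  rw [eExp, map_add, W_single, W_single]

lemma Dk_W [NeZero n] {k : ℕ} {m : Fin n →₀ ℕ} (w : Fin n → ℕ) (c : ℕ)
    (hw : ∀ j : ℕ, W w (eExp n j) = c) (h : Dk n k m) : k * c ≤ W w m := by
  obtain ⟨μ, hc, hl⟩ := h
  have hsum : W w (μ.map (eExp n)).sum = k * c := by
    rw [map_multiset_sum, Multiset.map_map]
    have : (μ.map (W w ∘ eExp n)) = μ.map (fun _ => c) := Multiset.map_congr rfl fun x _ => hw x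
    rw [this, Multiset.map_const', Multiset.sum_replicate, smul_eq_mul, hc]
  exact hsum ▸ W_mono w hl

lemma evenCount : ∀ r : ℕ, (∑ j ∈ Finset.range r, if Even (1 + j) then (1:ℕ) else 0) = r / 2 := by
  intro r
  induction r with
  | zero => simp
  | succ r ih =>
    rw [Finset.sum_range_succ, ih]
    have h1 : Even (1 + r) ↔ ¬ Even r := by
      rw [Nat.add_comm, Nat.even_add_one]
    rcases Nat.even_or_odd r with h | h
    · rw [if_neg (by rw [h1]; exact fun h' => h' h)]
      rw [Nat.even_iff] at h; omega
    · have hh : ¬ Even r := Nat.not_even_iff_odd.mpr h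
      rw [if_pos (h1.mpr hh)]
      rw [Nat.odd_iff] at h; omega

def pSet (n : ℕ) (K : Type*) [Field K] : Set (MvPolynomial (Fin n) K) :=
  {g | ∃ i : Fin n, Even (i : ℕ) ∧ g = X i}

noncomputable def pId (n : ℕ) (K : Type*) [Field K] : Ideal (MvPolynomial (Fin n) K) :=
  Ideal.span (pSet n K)

noncomputable def sub0 (n : ℕ) (K : Type*) [Field K] :
    MvPolynomial (Fin n) K →ₐ[K] MvPolynomial (Fin n) K :=
  aeval fun i : Fin n => if Even (i : ℕ) then 0 else X i

lemma sub_sub0_mem (g : MvPolynomial (Fin n) K) : g - sub0 n K g ∈ pId n K := by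
  induction g using MvPolynomial.induction_on with
  | C a => simp [sub0]
  | add p q hp hq =>
    rw [map_add, show p + q - (sub0 n K p + sub0 n K q)
      = (p - sub0 n K p) + (q - sub0 n K q) by ring]
    exact Ideal.add_mem _ hp hq
  | mul_X p i hp =>
    rw [map_mul, show (sub0 n K) (X i) = if Even (i : ℕ) then 0 else X i from aeval_X _ i]
    by_cases he : Even (i : ℕ)
    · rw [if_pos he, mul_zero, sub_zero]
      exact Ideal.mul_mem_left _ _ (Ideal.subset_span ⟨i, he, rfl⟩)
    · rw [if_neg he, show p * X i - sub0 n K p * X i = (p - sub0 n K p) * X i by ring]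
      exact Ideal.mul_mem_right _ _ hp

lemma pId_eq_ker : pId n K = RingHom.ker (sub0 n K).toRingHom := by
  apply le_antisymm
  · rw [pId, Ideal.span_le]
    rintro g ⟨i, he, rfl⟩
    rw [SetLike.mem_coe, RingHom.mem_ker]
    show (sub0 n K) (X i) = 0
    rw [show (sub0 n K) (X i) = if Even (i : ℕ) then 0 else X i from aeval_X _ i, if_pos he]
  · intro g hg
    have h0 : sub0 n K g = 0 := hg
    have := sub_sub0_mem (K := K) g
    rwa [h0, sub_zero] at this

lemma pId_prime : (pId n K).IsPrime := by
  rw [pId_eq_ker]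
  exact RingHom.ker_isPrime _

lemma mem_pId_of {g : MvPolynomial (Fin n) K}
    (h : ∀ m ∈ g.support, ∃ i : Fin n, Even (i : ℕ) ∧ m i ≠ 0) : g ∈ pId n K := by
  rw [MvPolynomial.as_sum g]
  apply Ideal.sum_mem
  intro m hm
  obtain ⟨i, he, hne0⟩ := h m hm
  have hle : Finsupp.single i 1 ≤ m := Finsupp.single_le_iff.mpr (Nat.one_le_iff_ne_zero.mpr hne0)
  have heq : (monomial m) (coeff m g)
      = X i * monomial (m - Finsupp.single i 1) (coeff m g) := by
    rw [X_eq, monomial_mul, one_mul, add_tsub_cancel_of_le hle]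
  rw [heq]
  exact Ideal.mul_mem_right _ _ (Ideal.subset_span ⟨i, he, rfl⟩)

lemma consec [NeZero n] (hn2 : 2 ≤ n) {I : Ideal (MvPolynomial (Fin n) K)}
    (hI : I = Ideal.span (cycGens n K)) (m : ℕ) :
    ∀ a : ℕ, (∏ j ∈ Finset.range (2 * m), X (idx n (a + j)) : MvPolynomial (Fin n) K) ∈ I ^ m := by
  induction m with
  | zero => intro a; simp
  | succ m ih =>
    intro a
    rw [show 2 * (m + 1) = 2 * m + 1 + 1 by ring, Finset.prod_range_succ, Finset.prod_range_succ,
      pow_succ, mul_assoc]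
    refine Ideal.mul_mem_mul (ih a) ?_
    have := edge_mem hn2 hI (a + 2 * m)
    rwa [show a + 2 * m + 1 = a + (2 * m + 1) by ring] at this

lemma prod_X_eq [NeZero n] (r a : ℕ) :
    (∏ j ∈ Finset.range r, X (idx n (a + j)) : MvPolynomial (Fin n) K)
      = monomial (∑ j ∈ Finset.range r, Finsupp.single (idx n (a + j)) 1) 1 := by
  induction r with
  | zero => simp [monomial_zero', C_1]
  | succ r ih =>
    rw [Finset.prod_range_succ, Finset.sum_range_succ, ih, X_eq, monomial_mul, mul_one]

lemma vP_mul_P_mem [NeZero n] (hn4 : 4 ≤ n) (hne : Even n)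
    {I : Ideal (MvPolynomial (Fin n) K)} (hI : I = Ideal.span (cycGens n K))
    {e : ℕ} (he : Even e) (hle : e ≤ n - 2) :
    (X (idx n e) * ∏ j ∈ Finset.range (n - 3), X (idx n (1 + j)) : MvPolynomial (Fin n) K)
      ∈ I ^ ((n - 2) / 2) := by
  have hn2 : 2 ≤ n := by omega
  have hn2e : n % 2 = 0 := Nat.even_iff.mp hne
  have he2 : e % 2 = 0 := Nat.even_iff.mp he
  rcases eq_or_ne e 0 with rfl | he0
  · -- e = 0 : X 0 * (x_1 ... x_{n-3}) = x_0 x_1 ... x_{n-3}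
    rw [mul_comm]
    have h1 : (∏ j ∈ Finset.range (n - 3), X (idx n (j + 1)) : MvPolynomial (Fin n) K) * X (idx n 0)
        = ∏ j ∈ Finset.range (n - 2), X (idx n j) := by
      rw [show n - 2 = (n - 3) + 1 by omega, Finset.prod_range_succ' (fun j => (X (idx n j) : MvPolynomial (Fin n) K)) (n - 3)]
    have hb : (∏ j ∈ Finset.range (n - 3), X (idx n (1 + j)) : MvPolynomial (Fin n) K)
        = ∏ j ∈ Finset.range (n - 3), X (idx n (j + 1)) :=
      Finset.prod_congr rfl fun j _ => by rw [Nat.add_comm]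
    rw [hb, h1]
    have hc := consec hn2 hI ((n - 2) / 2) 0
    rw [show 2 * ((n - 2) / 2) = n - 2 by omega] at hc
    have : (∏ j ∈ Finset.range (n - 2), X (idx n (0 + j)) : MvPolynomial (Fin n) K)
        = ∏ j ∈ Finset.range (n - 2), X (idx n j) :=
      Finset.prod_congr rfl fun j _ => by rw [Nat.zero_add]
    rwa [this] at hc
  · rcases eq_or_ne e (n - 2) with rfl | hen2
    · -- e = n-2
      rw [mul_comm]
      have hb : (∏ j ∈ Finset.range (n - 3), X (idx n (1 + j)) : MvPolynomial (Fin n) K) * X (idx n (n - 2))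
          = ∏ j ∈ Finset.range (n - 2), X (idx n (1 + j)) := by
        rw [show n - 2 = (n - 3) + 1 by omega, Finset.prod_range_succ,
          show (n - 3) + 1 = 1 + (n - 3) by omega]
      rw [hb]
      have hc := consec hn2 hI ((n - 2) / 2) 1
      rwa [show 2 * ((n - 2) / 2) = n - 2 by omega] at hc
    · -- 2 ≤ e ≤ n - 4
      have he2' : 2 ≤ e := by omega
      have hen4 : e ≤ n - 4 := by omega
      have hsplit : n - 3 = (e - 1) + (n - 2 - e) := by omega
      rw [hsplit, Finset.prod_range_add]
      -- goal: X (idx e) * ((∏_{i<e-1} X (idx (1+i))) * (∏_{i<n-2-e} X (idx (1+((e-1)+i))))) ∈ I^((n-2)/2)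
      have hB : (∏ i ∈ Finset.range (n - 2 - e), X (idx n (1 + (e - 1 + i))) : MvPolynomial (Fin n) K)
          = ∏ i ∈ Finset.range (n - 2 - e), X (idx n (e + i)) :=
        Finset.prod_congr rfl fun i _ => by rw [show 1 + (e - 1 + i) = e + i by omega]
      have hA : (X (idx n e) * ∏ i ∈ Finset.range (e - 1), X (idx n (1 + i)) : MvPolynomial (Fin n) K)
          = ∏ i ∈ Finset.range e, X (idx n (1 + i)) := by
        conv_rhs => rw [show e = (e - 1) + 1 by omega, Finset.prod_range_succ]
        rw [show 1 + (e - 1) = e by omega, mul_comm]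
      rw [hB, ← mul_assoc, hA]
      have h1 : (∏ i ∈ Finset.range e, X (idx n (1 + i)) : MvPolynomial (Fin n) K) ∈ I ^ (e / 2) := by
        have hc := consec hn2 hI (e / 2) 1
        rwa [show 2 * (e / 2) = e by omega] at hc
      have h2 : (∏ i ∈ Finset.range (n - 2 - e), X (idx n (e + i)) : MvPolynomial (Fin n) K)
          ∈ I ^ ((n - 2 - e) / 2) := by
        have hc := consec hn2 hI ((n - 2 - e) / 2) e
        rwa [show 2 * ((n - 2 - e) / 2) = n - 2 - e by omega] at hc
      have := Ideal.mul_mem_mul h1 h2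
      rwa [← pow_add, show e / 2 + (n - 2 - e) / 2 = (n - 2) / 2 by omega] at this

lemma upper [NeZero n] (hn4 : 4 ≤ n) (hne : Even n)
    {I : Ideal (MvPolynomial (Fin n) K)} (hI : I = Ideal.span (cycGens n K))
    {k : ℕ} (hk1 : 1 ≤ k) (hk : (n - 2) / 2 ≤ k) :
    ∃ f : MvPolynomial (Fin n) K, f.IsHomogeneous (2 * k - 1) ∧
      (I ^ k).colon (Ideal.span {f}) = pId n K := by
  have hn2 : 2 ≤ n := by omega
  have hmod : n % 2 = 0 := Nat.even_iff.mp hne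
  set t := k - (n - 2) / 2 with ht
  have hkk : k = (n - 2) / 2 + t := by omega
  set fexp : Fin n →₀ ℕ :=
    (∑ j ∈ Finset.range (n - 3), Finsupp.single (idx n (1 + j)) 1) + t • eExp n 1 with hfexp
  have hfactor : (monomial fexp (1 : K))
      = (∏ j ∈ Finset.range (n - 3), X (idx n (1 + j)))
        * ((X (idx n 1) : MvPolynomial (Fin n) K) * X (idx n 2)) ^ t := by
    rw [prod_X_eq (n - 3) 1, X_mul_X, monomial_pow, monomial_mul, hfexp]
    norm_num
    rw [eExp]
    simp [smul_add, Finsupp.smul_single]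
  refine ⟨monomial fexp 1, ?_, ?_⟩
  · apply isHomogeneous_monomial
    rw [← W_one, hfexp, map_add, map_sum, map_nsmul, W_eExp_one, smul_eq_mul]
    have : ∀ j ∈ Finset.range (n - 3), W (fun _ => 1) (Finsupp.single (idx n (1 + j)) 1) = 1 := by
      intro j _; rw [W_single, mul_one]
    rw [Finset.sum_congr rfl this, Finset.sum_const, Finset.card_range, smul_eq_mul, mul_one]
    omega
  · apply le_antisymm
    · -- colon ≤ pId
      intro g hg
      rw [Ideal.mem_colon_span_singleton] at hg
      apply mem_pId_of
      intro m hm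
      by_contra hno
      push_neg at hno
      have hcm : coeff m g ≠ 0 := MvPolynomial.mem_support_iff.mp hm
      have hsup : (m + fexp) ∈ (g * monomial fexp (1 : K)).support :=
        MvPolynomial.mem_support_iff.mpr
          (by rw [MvPolynomial.coeff_mul_monomial, mul_one]; exact hcm)
      have hDk : Dk n k (m + fexp) := pow_le_Jk hn2 hI k hg _ hsup
      have hWm : W (wEv n) m = 0 := by
        rw [W_apply]; apply Finset.sum_eq_zero; intro i _
        by_cases hei : Even (i : ℕ)
        · rw [hno i hei, mul_zero]
        · rw [show wEv n i = 0 from if_neg hei, zero_mul]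
      have hWf : W (wEv n) fexp = (n - 4) / 2 + t := by
        rw [hfexp, map_add, map_sum, map_nsmul, W_eExp_even hne, smul_eq_mul, mul_one]
        congr 1
        have hcg : ∀ j ∈ Finset.range (n - 3),
            W (wEv n) (Finsupp.single (idx n (1 + j)) 1) = if Even (1 + j) then 1 else 0 := by
          intro j hj
          rw [W_single, mul_one, wEv]
          have hv : ((idx n (1 + j) : Fin n) : ℕ) = 1 + j :=
            Nat.mod_eq_of_lt (by have := Finset.mem_range.mp hj; omega)
          rw [hv]
        rw [Finset.sum_congr rfl hcg, evenCount]
        omega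
      have hk2 := Dk_W (wEv n) 1 (W_eExp_even hne) hDk
      rw [mul_one, map_add, hWm, hWf] at hk2
      omega
    · -- pId ≤ colon
      rw [pId, Ideal.span_le]
      rintro g ⟨i, hei, rfl⟩
      rw [SetLike.mem_coe, Ideal.mem_colon_span_singleton]
      have hival : (i : ℕ) ≤ n - 2 := by
        have h1 := i.isLt
        have h2 : (i : ℕ) % 2 = 0 := Nat.even_iff.mp hei
        omega
      have hXi : (X i : MvPolynomial (Fin n) K) = X (idx n (i : ℕ)) := by
        rw [show idx n (i : ℕ) = i from Fin.ext (Nat.mod_eq_of_lt i.isLt)]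
      rw [hfactor, hXi, ← mul_assoc]
      have h1 := vP_mul_P_mem hn4 hne hI hei hival
      have h2 : ((X (idx n 1) : MvPolynomial (Fin n) K) * X (idx n 2)) ^ t ∈ I ^ t :=
        Ideal.pow_mem_pow (edge_mem hn2 hI 1) t
      have := Ideal.mul_mem_mul h1 h2
      rwa [← pow_add, show (n - 2) / 2 + t = k from hkk.symm] at this

lemma colon_bot_eq_top (I' : Ideal (MvPolynomial (Fin n) K)) :
    I'.colon (Ideal.span {(0 : MvPolynomial (Fin n) K)}) = ⊤ := by
  rw [eq_top_iff]
  intro x _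
  rw [Submodule.mem_colon]
  intro p hp
  rw [Ideal.span_singleton_eq_bot.mpr rfl] at hp
  rw [Ideal.mem_bot.mp hp, smul_zero]
  exact I'.zero_mem

lemma colon_mem_Ass {I' p : Ideal (MvPolynomial (Fin n) K)} {f : MvPolynomial (Fin n) K}
    (hp : p.IsPrime) (hcol : I'.colon (Ideal.span {f}) = p) : p ∈ Ass I' := by
  refine ⟨hp, Ideal.Quotient.mk I' f, ?_⟩
  suffices hs' : (⊥ : Submodule (MvPolynomial (Fin n) K) (MvPolynomial (Fin n) K ⧸ I')).colon
      {Ideal.Quotient.mk I' f} = p by rw [hs', hp.radical]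
  ext a
  rw [Submodule.mem_colon_singleton, Submodule.mem_bot]
  have hs : a • (Ideal.Quotient.mk I' f) = Ideal.Quotient.mk I' (a * f) := rfl
  rw [hs, Ideal.Quotient.eq_zero_iff_mem, ← Ideal.mem_colon_span_singleton, hcol]

lemma Ass_le {I' p : Ideal (MvPolynomial (Fin n) K)} (hp : p ∈ Ass I') : I' ≤ p := by
  obtain ⟨hpr, x, rfl⟩ := hp
  obtain ⟨y, rfl⟩ := Ideal.Quotient.mk_surjective x
  intro a ha
  refine Ideal.le_radical ?_
  rw [Submodule.mem_colon_singleton, Submodule.mem_bot]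
  have hs : a • (Ideal.Quotient.mk I' y) = Ideal.Quotient.mk I' (a * y) := rfl
  rw [hs, Ideal.Quotient.eq_zero_iff_mem]
  exact Ideal.mul_mem_right _ _ ha

lemma lower [NeZero n] (hn4 : 4 ≤ n) {I : Ideal (MvPolynomial (Fin n) K)}
    (hI : I = Ideal.span (cycGens n K)) (k : ℕ) {d : ℕ}
    (f : MvPolynomial (Fin n) K) (p : Ideal (MvPolynomial (Fin n) K)) (hp : p ∈ Ass (I ^ k))
    (hf : f.IsHomogeneous d) (hcol : (I ^ k).colon (Ideal.span {f}) = p) :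
    2 * k - 1 ≤ d := by
  have hn2 : 2 ≤ n := by omega
  have hprime : p.IsPrime := hp.1
  have hf0 : f ≠ 0 := by
    rintro rfl
    exact hprime.ne_top (by rw [← hcol, colon_bot_eq_top])
  have hedge : (X (idx n 0) : MvPolynomial (Fin n) K) * X (idx n 1) ∈ I := edge_mem hn2 hI 0
  have hpow : ((X (idx n 0) : MvPolynomial (Fin n) K) * X (idx n 1)) ^ k ∈ p :=
    Ass_le hp (Ideal.pow_mem_pow hedge k)
  obtain ⟨i, hip⟩ : ∃ i : Fin n, (X i : MvPolynomial (Fin n) K) ∈ p := by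
    rcases hprime.mem_or_mem (hprime.mem_of_pow_mem k hpow) with h | h
    exacts [⟨_, h⟩, ⟨_, h⟩]
  rw [← hcol] at hip
  have hxf : (X i : MvPolynomial (Fin n) K) * f ∈ I ^ k := Ideal.mem_colon_span_singleton.mp hip
  have hne0 : (X i : MvPolynomial (Fin n) K) * f ≠ 0 := mul_ne_zero (X_ne_zero i) hf0
  have hhom : ((X i : MvPolynomial (Fin n) K) * f).IsHomogeneous (1 + d) :=
    (isHomogeneous_X K i).mul hf
  obtain ⟨m, hm⟩ := MvPolynomial.support_nonempty.mpr hne0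
  have hDk := pow_le_Jk hn2 hI k hxf m hm
  have h2k := Dk_W (fun _ => 1) 2 W_eExp_one hDk
  have hdm : W (fun _ => 1) m = 1 + d := homog_W_one hhom (MvPolynomial.mem_support_iff.mp hm)
  omega

end S16

/-- For an even `n ≥ 4`, the edge ideal
`I = ⟨x_1x_2, …, x_{n−1}x_n, x_nx_1⟩` of the cycle `C_n` satisfies `v(I^k) = 2k − 1`
for all `k ≥ 1` with `k ≥ n/2 − 1`. -/
theorem stmt16 {K : Type*} [Field K] {n : ℕ} (hn : 4 ≤ n) (heven : Even n)
    (I : Ideal (MvPolynomial (Fin n) K))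
    (hI : I = Ideal.span ({f | ∃ (i : ℕ) (h : i + 1 < n),
        f = (X (⟨i, by omega⟩ : Fin n) : MvPolynomial (Fin n) K) * X (⟨i + 1, h⟩ : Fin n)} ∪
      {(X (⟨n - 1, by omega⟩ : Fin n) : MvPolynomial (Fin n) K) * X (⟨0, by omega⟩ : Fin n)})) :
    ∀ k : ℕ, 1 ≤ k → n / 2 - 1 ≤ k → (vNumber (I ^ k) : ℤ) = 2 * k - 1 := by
  intro k hk1 hk2
  haveI : NeZero n := ⟨by omega⟩
  have hmod : n % 2 = 0 := Nat.even_iff.mp heven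
  have hI' : I = Ideal.span (S16.cycGens n K) := hI
  have hk' : (n - 2) / 2 ≤ k := by omega
  obtain ⟨f, hfh, hfcol⟩ := S16.upper hn heven hI' hk1 hk'
  have hAss : S16.pId n K ∈ Ass (I ^ k) := S16.colon_mem_Ass S16.pId_prime hfcol
  have hmem : (2 * k - 1) ∈ {d | ∃ f : MvPolynomial (Fin n) K, ∃ p ∈ Ass (I ^ k),
      f.IsHomogeneous d ∧ (I ^ k).colon (Ideal.span {f}) = p} :=
    ⟨f, S16.pId n K, hAss, hfh, hfcol⟩
  have hv : vNumber (I ^ k) = 2 * k - 1 := by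
    rw [vNumber]
    refine le_antisymm (Nat.sInf_le hmem) (le_csInf ⟨_, hmem⟩ ?_)
    rintro d ⟨f', p', hp', hf', hcol'⟩
    exact S16.lower hn hI' k f' p' hp' hf' hcol'
  rw [hv]
  omega
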